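/- arXiv:0806.4946 — 9 statements merged into one kernel-verified Lean document; each statement's English description precedes it below -/
import Mathlib

section
/- A residuated lattice A is simple if and only if every element a < 1 is nilpotent (there exists n with aⁿ = 0). -/
class ResLat (A : Type*) extends Lattice A, CommMonoid A where
  rbot : A
  himp : A → A → A
  rbot_le : ∀ a : A, rbot ≤ a
  le_one : ∀ a : A, a ≤ 1
  resid : ∀ a b c : A, a * b ≤ c ↔ a ≤ himp b c

namespace ResLat

variable {A : Type*} [ResLat A]

def rneg (a : A) : A := himp a rbot

def Nilpotent (a : A) : Prop := ∃ n : ℕ, 1 ≤ n ∧ a ^ n = rbot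

def Unity (a : A) : Prop := ∀ n : ℕ, 1 ≤ n → Nilpotent (rneg (a ^ n))

def ImpFilter (F : Set A) : Prop :=
  (1 : A) ∈ F ∧ ∀ x y : A, x ∈ F → himp x y ∈ F → y ∈ F

def MaxImpFilter (F : Set A) : Prop :=
  ImpFilter F ∧ F ≠ Set.univ ∧
    ∀ G : Set A, ImpFilter G → F ⊆ G → G = F ∨ G = Set.univ

def Rad (A : Type*) [ResLat A] : Set A :=
  { x | ∀ F : Set A, MaxImpFilter F → x ∈ F }

def Ds (A : Type*) [ResLat A] : Set A := { x | rneg x = rbot }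

def Simple (A : Type*) [ResLat A] : Prop :=
  Nontrivial A ∧ ∀ F : Set A, ImpFilter F → F = {1} ∨ F = Set.univ

def IsHom {B : Type*} [ResLat B] (f : A → B) : Prop :=
  (∀ x y : A, f (x * y) = f x * f y) ∧
  (∀ x y : A, f (himp x y) = himp (f x) (f y)) ∧
  (∀ x y : A, f (x ⊓ y) = f x ⊓ f y) ∧
  (∀ x y : A, f (x ⊔ y) = f x ⊔ f y) ∧
  f rbot = rbot ∧ f 1 = 1

end ResLat

open ResLat

-- auxiliary lemmas
namespace ResLat

variable {A : Type*} [ResLat A]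

lemma rmul_le_rmul {a b c d : A} (hab : a ≤ b) (hcd : c ≤ d) : a * c ≤ b * d := by
  have h1 : a * c ≤ b * c := by
    have hb : b ≤ himp c (b * c) := (resid b c (b * c)).mp le_rfl
    exact (resid a c (b * c)).mpr (le_trans hab hb)
  have h2 : b * c ≤ b * d := by
    rw [mul_comm b c, mul_comm b d]
    have hd : d ≤ himp b (d * b) := (resid d b (d * b)).mp le_rfl
    exact (resid c b (d * b)).mpr (le_trans hcd hd)
  exact le_trans h1 h2

lemma mul_himp_le {x y : A} : x * himp x y ≤ y := by
  rw [mul_comm]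
  exact (resid (himp x y) x y).mpr le_rfl

lemma mem_of_le_of_mem {F : Set A} (hF : ImpFilter F) {x y : A}
    (hx : x ∈ F) (hxy : x ≤ y) : y ∈ F := by
  have h1 : himp x y = 1 := by
    apply le_antisymm (le_one _)
    exact (resid 1 x y).mp (by simpa using hxy)
  exact hF.2 x y hx (h1 ▸ hF.1)

lemma mul_mem {F : Set A} (hF : ImpFilter F) {x y : A}
    (hx : x ∈ F) (hy : y ∈ F) : x * y ∈ F := by
  have h : y ≤ himp x (x * y) := (resid y x (x * y)).mp (by rw [mul_comm])
  exact hF.2 x (x * y) hx (mem_of_le_of_mem hF hy h)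

lemma pow_mem {F : Set A} (hF : ImpFilter F) {x : A} (hx : x ∈ F) :
    ∀ n : ℕ, x ^ n ∈ F := by
  intro n
  induction n with
  | zero => simpa using hF.1
  | succ k ih => rw [pow_succ]; exact mul_mem hF ih hx

end ResLat

theorem stmt3 (A : Type*) [ResLat A] [Nontrivial A] :
    Simple A ↔ ∀ a : A, a < 1 → Nilpotent a := by
  constructor
  · rintro ⟨_, hS⟩ a ha
    set F : Set A := {x | ∃ n : ℕ, 1 ≤ n ∧ a ^ n ≤ x} with hFdef
    have hF : ImpFilter F := by
      constructor
      · exact ⟨1, le_rfl, le_one _⟩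
      · rintro x y ⟨n, hn, hnx⟩ ⟨m, hm, hmy⟩
        refine ⟨n + m, by omega, ?_⟩
        calc a ^ (n + m) = a ^ n * a ^ m := pow_add a n m
          _ ≤ x * himp x y := rmul_le_rmul hnx hmy
          _ ≤ y := mul_himp_le
    rcases hS F hF with h | h
    · exfalso
      have : a ∈ F := ⟨1, le_rfl, by simp⟩
      rw [h] at this
      exact absurd this (by simpa using ha.ne)
    · have : (rbot : A) ∈ F := by rw [h]; trivial
      obtain ⟨n, hn, hle⟩ := this
      exact ⟨n, hn, le_antisymm hle (rbot_le _)⟩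
  · intro h
    refine ⟨inferInstance, fun F hF => ?_⟩
    by_cases hF1 : F = {1}
    · exact Or.inl hF1
    · right
      have : ∃ a ∈ F, a ≠ 1 := by
        by_contra hc
        push_neg at hc
        apply hF1
        ext x
        simp only [Set.mem_singleton_iff]
        exact ⟨fun hx => hc x hx, fun hx => hx ▸ hF.1⟩
      obtain ⟨a, haF, ha1⟩ := this
      obtain ⟨n, _, hpow⟩ := h a (lt_of_le_of_ne (le_one a) ha1)
      have hb : (rbot : A) ∈ F := hpow ▸ pow_mem hF haF n
      ext x
      simp only [Set.mem_univ, iff_true]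
      exact mem_of_le_of_mem hF hb (rbot_le x)
end

section
/- Let A be a residuated lattice embedded via f into a product ∏_{i∈I} L_i of linearly ordered residuated lattices. Then a ∈ A is a unity in A if and only if for each i ∈ I, the i-th coordinate π_i(f(a)) is a unity in L_i. -/
open ResLat

section Aux

variable {A : Type*} [ResLat A]

lemma rl_mul_le_mul_right {a c d : A} (h : c ≤ d) : a * c ≤ a * d := by
  have hd : d ≤ himp a (a * d) := (ResLat.resid d a (a * d)).1 (by rw [mul_comm])
  have hc : c ≤ himp a (a * d) := le_trans h hd
  have := (ResLat.resid c a (a * d)).2 hc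
  rwa [mul_comm] at this

lemma rl_mul_le_mul {a b c d : A} (h1 : a ≤ b) (h2 : c ≤ d) : a * c ≤ b * d := by
  calc a * c ≤ a * d := rl_mul_le_mul_right h2
    _ = d * a := mul_comm _ _
    _ ≤ d * b := rl_mul_le_mul_right h1
    _ = b * d := mul_comm _ _

lemma rl_neg_mul (x : A) : rneg x * x ≤ rbot :=
  (ResLat.resid (rneg x) x rbot).2 le_rfl

lemma rl_hom_pow {B : Type*} [ResLat B] {g : A → B} (hg : IsHom g) (x : A) :
    ∀ m : ℕ, g (x ^ m) = (g x) ^ m := by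
  intro m
  induction m with
  | zero => simpa using hg.2.2.2.2.2
  | succ k ih => rw [pow_succ, hg.1, ih, pow_succ]

lemma rl_hom_rneg {B : Type*} [ResLat B] {g : A → B} (hg : IsHom g) (x : A) :
    g (rneg x) = rneg (g x) := by
  unfold rneg
  rw [hg.2.1, hg.2.2.2.2.1]

lemma unity_chain {L : Type*} [ResLat L] (htot : ∀ x y : L, x ≤ y ∨ y ≤ x)
    {c : L} (h : Unity c) (n : ℕ) (hn : 1 ≤ n) : (rneg (c ^ n)) ^ 2 = rbot := by
  rcases htot (c ^ n) (rneg (c ^ n)) with hle | hle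
  · have h2 : c ^ n * c ^ n ≤ rbot :=
      le_trans (rl_mul_le_mul hle le_rfl) (rl_neg_mul _)
    have hpow : c ^ (2 * n) = rbot := by
      apply le_antisymm _ (ResLat.rbot_le _)
      rw [two_mul, pow_add]; exact h2
    have hone : rneg (c ^ (2 * n)) = (1 : L) := by
      rw [hpow]
      refine le_antisymm (ResLat.le_one _) ?_
      exact (ResLat.resid 1 rbot rbot).1 (by rw [one_mul])
    obtain ⟨m, hm1, hm⟩ := h (2 * n) (by omega)
    rw [hone, one_pow] at hm
    apply le_antisymm _ (ResLat.rbot_le _)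
    calc (rneg (c ^ n)) ^ 2 ≤ 1 := ResLat.le_one _
      _ = rbot := hm
  · apply le_antisymm _ (ResLat.rbot_le _)
    calc (rneg (c ^ n)) ^ 2 = rneg (c ^ n) * rneg (c ^ n) := sq _
      _ ≤ rneg (c ^ n) * c ^ n := rl_mul_le_mul le_rfl hle
      _ ≤ rbot := rl_neg_mul _

end Aux

theorem stmt6 {A : Type*} [ResLat A] {I : Type*} (L : I → Type*) [∀ i, ResLat (L i)]
    (htot : ∀ i, ∀ x y : L i, x ≤ y ∨ y ≤ x)
    (f : A → ∀ i, L i) (hinj : Function.Injective f)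
    (hhom : ∀ i, IsHom (fun a : A => f a i)) (a : A) :
    Unity a ↔ ∀ i, Unity (f a i) := by
  constructor
  · intro h i n hn
    obtain ⟨m, hm1, hm⟩ := h n hn
    refine ⟨m, hm1, ?_⟩
    have hg := hhom i
    have h2 := congrArg (fun x : A => f x i) hm
    simpa only [rl_hom_pow hg, rl_hom_rneg hg, hg.2.2.2.2.1] using h2
  · intro h n hn
    refine ⟨2, by norm_num, ?_⟩
    apply hinj
    funext i
    have hg := hhom i
    have key : (rneg ((f a i) ^ n)) ^ 2 = rbot := unity_chain (htot i) (h i) n hn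
    show f ((rneg (a ^ n)) ^ 2) i = f rbot i
    simp only [rl_hom_pow hg, rl_hom_rneg hg, hg.2.2.2.2.1]
    exact key
end

section
/- If a residuated lattice A has a principal unity a (i.e., Rad(A) = [a) is the upward closure of a), then for every x ∈ Rad(A), x → ¬a = ¬a. -/
open ResLat

lemma mul_le_mul_left'' {A : Type*} [ResLat A] {x y : A} (hxy : x ≤ y) (z : A) :
    z * x ≤ z * y := by
  have h1 : y ≤ himp z (z * y) := (resid y z (z * y)).mp (by rw [mul_comm])
  have h2 : x * z ≤ z * y := (resid x z (z * y)).mpr (le_trans hxy h1)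
  rwa [mul_comm] at h2

lemma himp_mul_le {A : Type*} [ResLat A] (x c : A) : himp x c * x ≤ c :=
  (resid _ x c).mpr le_rfl

theorem stmt7 {A : Type*} [ResLat A] (a : A) (h : Rad A = Set.Ici a) :
    ∀ x ∈ Rad A, himp x (rneg a) = rneg a := by
  have ha : a ∈ Rad A := by rw [h]; exact Set.mem_Ici.mpr le_rfl
  have himpa : himp a (a * a) ∈ Rad A := by
    rw [h]; exact Set.mem_Ici.mpr ((resid a a (a * a)).mp le_rfl)
  have hsq : a ≤ a * a := by
    have : a * a ∈ Rad A := fun F hF =>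
      hF.1.2 a (a * a) (ha F hF) (himpa F hF)
    rwa [h] at this
  intro x hx
  have hax : a ≤ x := by rwa [h] at hx
  apply le_antisymm
  · rw [rneg]
    rw [← resid]
    calc himp x (rneg a) * a ≤ himp x (rneg a) * (a * a) :=
          mul_le_mul_left'' hsq _
      _ ≤ himp x (rneg a) * (x * a) :=
          mul_le_mul_left'' (by rw [mul_comm x a]; exact mul_le_mul_left'' hax a) _
      _ = himp x (rneg a) * x * a := by rw [mul_assoc]
      _ ≤ rneg a * a := by
          have := himp_mul_le x (rneg a)
          calc himp x (rneg a) * x * a = a * (himp x (rneg a) * x) := by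
                rw [mul_comm]
            _ ≤ a * rneg a := mul_le_mul_left'' this a
            _ = rneg a * a := by rw [mul_comm]
      _ ≤ rbot := by rw [rneg]; exact himp_mul_le a rbot
  · rw [← resid]
    calc rneg a * x ≤ rneg a * 1 := mul_le_mul_left'' (le_one x) _
      _ = rneg a := mul_one _
end

section
/- In the residuated lattice A^◇ on pairs {(a,b) : a ≤ b} of a residuated lattice A, negation satisfies ¬(a,b) = (¬b, ¬a); in particular (0,1) is a fixed point of negation. Moreover A^◇ is involutive (satisfies ¬¬x = x) if and only if A is, and A^◇ is distributive if and only if A is. -/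
open ResLat

abbrev Diam (A : Type*) [ResLat A] : Type _ := {p : A × A // p.1 ≤ p.2}

/-! Negating `(a, b)` gives `(¬a ∧ ¬b, ¬a)`, and `¬a ∧ ¬b = ¬b` because negation is antitone and
`a ≤ b`. Both involutivity and distributivity are identities checked componentwise in `A^◇`, so
they lift from `A`; conversely they restrict to `A` along the diagonal `a ↦ (a, a)`. -/

namespace ResLat

variable {A : Type*} [ResLat A]

lemma himp_mul_le (b c : A) : himp b c * b ≤ c := (resid _ _ _).2 le_rfl

lemma mul_le_mul_left_of_le (c : A) {a b : A} (h : a ≤ b) : c * a ≤ c * b := by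
  rw [mul_comm c a]
  exact (resid a c (c * b)).2 (h.trans ((resid b c (c * b)).1 (mul_comm b c).le))

lemma himp_anti_left {a b : A} (h : a ≤ b) (c : A) : himp b c ≤ himp a c :=
  (resid _ _ _).1 ((mul_le_mul_left_of_le (himp b c) h).trans (himp_mul_le b c))

lemma rneg_anti {a b : A} (h : a ≤ b) : rneg b ≤ rneg a := himp_anti_left h _

lemma rneg_one : rneg (1 : A) = rbot :=
  le_antisymm (by simpa only [rneg, mul_one] using himp_mul_le (1 : A) rbot) (rbot_le _)

lemma rneg_rbot : rneg (rbot : A) = 1 :=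
  le_antisymm (le_one _) ((resid 1 rbot rbot).1 (one_mul _).le)

end ResLat

namespace Diam

variable {A : Type*} [ResLat A]

def diag (a : A) : Diam A := ⟨(a, a), le_rfl⟩

variable (L : ResLat (Diam A))

lemma himp_rbot_val
    (hhimp : ∀ p q : Diam A,
      (L.himp p q).val =
        (himp p.val.1 q.val.1 ⊓ himp p.val.2 q.val.2, himp p.val.1 q.val.2))
    (hbot : L.rbot.val = ((rbot : A), (rbot : A))) (p : Diam A) :
    (L.himp p L.rbot).val = (rneg p.val.2, rneg p.val.1) := by
  rw [hhimp, hbot]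
  exact Prod.ext (inf_eq_right.2 (rneg_anti p.property)) rfl

variable {L}

lemma involutive_iff
    (hneg : ∀ p : Diam A, (L.himp p L.rbot).val = (rneg p.val.2, rneg p.val.1)) :
    (∀ p : Diam A, L.himp (L.himp p L.rbot) L.rbot = p) ↔ ∀ a : A, rneg (rneg a) = a := by
  simp only [Subtype.ext_iff, hneg, Prod.ext_iff]
  exact ⟨fun h a => (h (diag a)).1, fun h p => ⟨h _, h _⟩⟩

lemma distrib_iff
    (hinf : ∀ p q : Diam A,
      ((letI := L; p ⊓ q) : Diam A).val = (p.val.1 ⊓ q.val.1, p.val.2 ⊓ q.val.2))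
    (hsup : ∀ p q : Diam A,
      ((letI := L; p ⊔ q) : Diam A).val = (p.val.1 ⊔ q.val.1, p.val.2 ⊔ q.val.2)) :
    (∀ x y z : Diam A, (letI := L; x ⊓ (y ⊔ z)) = (letI := L; (x ⊓ y) ⊔ (x ⊓ z))) ↔
      ∀ x y z : A, x ⊓ (y ⊔ z) = (x ⊓ y) ⊔ (x ⊓ z) := by
  simp only [Subtype.ext_iff, hinf, hsup, Prod.ext_iff]
  exact ⟨fun h x y z => (h (diag x) (diag y) (diag z)).1, fun h x y z => ⟨h _ _ _, h _ _ _⟩⟩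

end Diam

theorem stmt9_general (A : Type*) [ResLat A] (L : ResLat (Diam A))
    (hhimp : ∀ p q : Diam A,
      (L.himp p q).val =
        (himp p.val.1 q.val.1 ⊓ himp p.val.2 q.val.2, himp p.val.1 q.val.2))
    (hinf : ∀ p q : Diam A,
      ((letI := L; p ⊓ q) : Diam A).val = (p.val.1 ⊓ q.val.1, p.val.2 ⊓ q.val.2))
    (hsup : ∀ p q : Diam A,
      ((letI := L; p ⊔ q) : Diam A).val = (p.val.1 ⊔ q.val.1, p.val.2 ⊔ q.val.2))
    (hbot : L.rbot.val = ((rbot : A), (rbot : A))) :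
    (∀ p : Diam A, (L.himp p L.rbot).val = (rneg p.val.2, rneg p.val.1)) ∧
    (L.himp ⟨((rbot : A), (1 : A)), le_one rbot⟩ L.rbot =
      ⟨((rbot : A), (1 : A)), le_one rbot⟩) ∧
    ((∀ p : Diam A, L.himp (L.himp p L.rbot) L.rbot = p) ↔
      ∀ a : A, rneg (rneg a) = a) ∧
    ((∀ x y z : Diam A, (letI := L; x ⊓ (y ⊔ z)) = (letI := L; (x ⊓ y) ⊔ (x ⊓ z))) ↔
      ∀ x y z : A, x ⊓ (y ⊔ z) = (x ⊓ y) ⊔ (x ⊓ z)) := by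
  have hneg := Diam.himp_rbot_val L hhimp hbot
  refine ⟨hneg, ?_, Diam.involutive_iff hneg, Diam.distrib_iff hinf hsup⟩
  rw [Subtype.ext_iff, hneg, rneg_one, rneg_rbot]

theorem stmt9 (A : Type*) [ResLat A] (L : ResLat (Diam A))
    (hmul : ∀ p q : Diam A,
      ((letI := L; p * q) : Diam A).val =
        (p.val.1 * q.val.1, (p.val.1 * q.val.2) ⊔ (q.val.1 * p.val.2)))
    (hhimp : ∀ p q : Diam A,
      (L.himp p q).val =
        (himp p.val.1 q.val.1 ⊓ himp p.val.2 q.val.2, himp p.val.1 q.val.2))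
    (hinf : ∀ p q : Diam A,
      ((letI := L; p ⊓ q) : Diam A).val = (p.val.1 ⊓ q.val.1, p.val.2 ⊓ q.val.2))
    (hsup : ∀ p q : Diam A,
      ((letI := L; p ⊔ q) : Diam A).val = (p.val.1 ⊔ q.val.1, p.val.2 ⊔ q.val.2))
    (hbot : L.rbot.val = ((rbot : A), (rbot : A)))
    (hone : ((letI := L; 1) : Diam A).val = (1, 1)) :
    (∀ p : Diam A, (L.himp p L.rbot).val = (rneg p.val.2, rneg p.val.1)) ∧
    (L.himp ⟨((rbot : A), (1 : A)), le_one rbot⟩ L.rbot =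
      ⟨((rbot : A), (1 : A)), le_one rbot⟩) ∧
    ((∀ p : Diam A, L.himp (L.himp p L.rbot) L.rbot = p) ↔
      ∀ a : A, rneg (rneg a) = a) ∧
    ((∀ x y z : Diam A, (letI := L; x ⊓ (y ⊔ z)) = (letI := L; (x ⊓ y) ⊔ (x ⊓ z))) ↔
      ∀ x y z : A, x ⊓ (y ⊔ z) = (x ⊓ y) ⊔ (x ⊓ z)) :=
  stmt9_general A L hhimp hinf hsup hbot
end

section
/- No nontrivial residuated lattice A is a retract of its extension A^◇; hence the variety of residuated lattices has only trivial absolute retracts (and only trivial injectives). More precisely: if A is a nontrivial residuated lattice and f : A^◇ → A is a homomorphism with f(a,a) = a for all a ∈ A, then a contradiction follows. -/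
open ResLat

section Aux

variable {A : Type*} [ResLat A]

lemma aux_mul_rbot (a : A) : a * (rbot : A) = rbot := by
  have h1 : (1 : A) * (rbot : A) ≤ rbot := by rw [one_mul]
  have h2 : (1 : A) ≤ himp (rbot : A) (rbot : A) := (resid 1 rbot rbot).mp h1
  exact le_antisymm ((resid a rbot rbot).mpr (le_trans (ResLat.le_one a) h2))
    (ResLat.rbot_le _)

lemma aux_rbot_mul (a : A) : (rbot : A) * a = rbot := by
  rw [mul_comm, aux_mul_rbot]

lemma aux_himp_rbot (a : A) : himp (rbot : A) a = 1 := by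
  refine le_antisymm (ResLat.le_one _) ?_
  exact (resid 1 rbot a).mp (by rw [one_mul]; exact ResLat.rbot_le a)

lemma aux_himp_one (a : A) : himp (1 : A) a = a := by
  refine le_antisymm ?_ ?_
  · have := (resid (himp (1 : A) a) 1 a).mpr le_rfl
    rwa [mul_one] at this
  · exact (resid a 1 a).mp (by rw [mul_one])

end Aux

theorem stmt10 (A : Type*) [ResLat A] [Nontrivial A] (L : ResLat (Diam A))
    (hmul : ∀ p q : Diam A,
      ((letI := L; p * q) : Diam A).val =
        (p.val.1 * q.val.1, (p.val.1 * q.val.2) ⊔ (q.val.1 * p.val.2)))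
    (hhimp : ∀ p q : Diam A,
      (L.himp p q).val =
        (himp p.val.1 q.val.1 ⊓ himp p.val.2 q.val.2, himp p.val.1 q.val.2))
    (hinf : ∀ p q : Diam A,
      ((letI := L; p ⊓ q) : Diam A).val = (p.val.1 ⊓ q.val.1, p.val.2 ⊓ q.val.2))
    (hsup : ∀ p q : Diam A,
      ((letI := L; p ⊔ q) : Diam A).val = (p.val.1 ⊔ q.val.1, p.val.2 ⊔ q.val.2))
    (hbot : L.rbot.val = ((rbot : A), (rbot : A)))
    (hone : ((letI := L; 1) : Diam A).val = (1, 1))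
    (f : Diam A → A)
    (hf : letI := L; IsHom f)
    (hretr : ∀ a : A, f ⟨(a, a), le_refl a⟩ = a) :
    False := by
  letI := L
  obtain ⟨fmul, fhimp, finf, fsup, fbot, fone⟩ := hf
  set d : Diam A := ⟨((rbot : A), (1 : A)), ResLat.rbot_le 1⟩ with hd
  set x : A := f d with hx
  -- diag a as element of Diam A
  have diag : ∀ a : A, Diam A := fun a => ⟨(a, a), le_refl a⟩
  -- d * d = rbot
  have hdd : (letI := L; d * d) = L.rbot := by
    apply Subtype.ext
    rw [hmul, hbot]
    simp [hd, aux_mul_rbot, aux_rbot_mul, one_mul]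
  have hxx : x * x = (rbot : A) := by
    have := fmul d d
    rw [hdd, fbot] at this
    exact this.symm
  -- diag a * d = ⟨(rbot, a)⟩ and d ⊓ diag a = ⟨(rbot, a)⟩
  have key : ∀ a : A, a * x = x ⊓ a := by
    intro a
    have e1 : (letI := L; (⟨(a, a), le_refl a⟩ : Diam A) * d) =
        ⟨((rbot : A), a), ResLat.rbot_le a⟩ := by
      apply Subtype.ext
      rw [hmul]
      simp [hd, aux_mul_rbot, aux_rbot_mul, mul_one, sup_eq_left.mpr (ResLat.rbot_le a)]
    have e2 : (letI := L; d ⊓ (⟨(a, a), le_refl a⟩ : Diam A)) =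
        ⟨((rbot : A), a), ResLat.rbot_le a⟩ := by
      apply Subtype.ext
      rw [hinf]
      simp [hd, inf_eq_left.mpr (ResLat.rbot_le a), inf_eq_right.mpr (ResLat.le_one a)]
    have h1 := fmul (⟨(a, a), le_refl a⟩ : Diam A) d
    rw [e1, hretr] at h1
    have h2 := finf d (⟨(a, a), le_refl a⟩ : Diam A)
    rw [e2, hretr] at h2
    rw [← h1, ← h2]
  have hxbot : x = (rbot : A) := by
    have := key x
    rw [hxx, inf_idem] at this
    exact this.symm
  -- himp d (diag a) = ⟨(a,1)⟩ = d ⊔ diag a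
  obtain ⟨a, b, hab⟩ := exists_pair_ne A
  have final : ∀ c : A, c = 1 := by
    intro c
    have e3 : L.himp d (⟨(c, c), le_refl c⟩ : Diam A) =
        ⟨(c, (1 : A)), ResLat.le_one c⟩ := by
      apply Subtype.ext
      rw [hhimp]
      simp [hd, aux_himp_rbot, aux_himp_one, inf_eq_right.mpr (ResLat.le_one c)]
    have e4 : (letI := L; d ⊔ (⟨(c, c), le_refl c⟩ : Diam A)) =
        ⟨(c, (1 : A)), ResLat.le_one c⟩ := by
      apply Subtype.ext
      rw [hsup]
      simp [hd, sup_eq_right.mpr (ResLat.rbot_le c), sup_eq_left.mpr (ResLat.le_one c)]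
    have h3 := fhimp d (⟨(c, c), le_refl c⟩ : Diam A)
    rw [e3, hretr] at h3
    have h4 := fsup d (⟨(c, c), le_refl c⟩ : Diam A)
    rw [e4, hretr] at h4
    have : himp x c = x ⊔ c := by rw [← h3, ← h4]
    rw [hxbot] at this
    rw [aux_himp_rbot, sup_eq_right.mpr (ResLat.rbot_le c)] at this
    exact this.symm
  exact hab ((final a).trans (final b).symm)
end

section
/- In a residuated lattice satisfying x ∧ ¬x = 0 (an SRL-algebra), 0 is the only nilpotent element. -/
open ResLat

theorem aux_mul_le_mul {A : Type*} [ResLat A] (a : A) {b c : A} (h : b ≤ c) :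
    a * b ≤ a * c := by
  have h1 : c ≤ himp a (a * c) := by
    rw [← resid, mul_comm]
  have h2 : b ≤ himp a (a * c) := le_trans h h1
  rw [← resid] at h2
  rw [mul_comm]; exact h2

theorem aux_pow_le {A : Type*} [ResLat A] (a : A) {m n : ℕ} (h : m ≤ n) :
    a ^ n ≤ a ^ m := by
  obtain ⟨k, rfl⟩ := Nat.exists_eq_add_of_le h
  calc a ^ (m + k) = a ^ m * a ^ k := pow_add a m k
    _ ≤ a ^ m * 1 := aux_mul_le_mul _ (ResLat.le_one _)
    _ = a ^ m := mul_one _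

theorem aux_sq {A : Type*} [ResLat A] (hS : ∀ x : A, x ⊓ rneg x = rbot)
    {a : A} (h : a * a ≤ rbot) : a = rbot := by
  have h1 : a ≤ rneg a := by rw [rneg, ← resid]; exact h
  have h2 : a ⊓ rneg a = a := inf_eq_left.mpr h1
  rw [← hS a, h2]


theorem stmt11 {A : Type*} [ResLat A] (hS : ∀ x : A, x ⊓ rneg x = rbot) :
    ∀ a : A, Nilpotent a → a = rbot := by
  intro a ⟨n, hn, hpow⟩
  -- strong induction on n
  induction n using Nat.strong_induction_on generalizing a with
  | _ n ih =>
    rcases Nat.lt_or_ge n 2 with h2 | h2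
    · interval_cases n
      · simpa using hpow
    · set m := (n + 1) / 2 with hm
      have hm1 : 1 ≤ m := by omega
      have hmn : m < n := by omega
      have h2m : n ≤ 2 * m := by omega
      have hsq : a ^ m * a ^ m ≤ rbot := by
        rw [← pow_add]
        calc a ^ (m + m) ≤ a ^ n := aux_pow_le a (by omega)
          _ = rbot := hpow
      have : a ^ m = rbot := aux_sq hS hsq
      exact ih m hmn a hm1 this
end

section
/- Every simple SRL-algebra is isomorphic to the two-element Boolean algebra; i.e., a residuated lattice satisfying x ∧ ¬x = 0 which is simple has exactly two elements. -/
open ResLat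

section Aux
variable {A : Type*} [ResLat A]

lemma my_mul_le_left {a b c : A} (h : a ≤ b) : a * c ≤ b * c := by
  rw [ResLat.resid]
  exact le_trans h ((ResLat.resid b c (b * c)).mp le_rfl)

lemma my_pow_le {z : A} {m n : ℕ} (h : n ≤ m) : z ^ m ≤ z ^ n := by
  obtain ⟨k, rfl⟩ := Nat.exists_eq_add_of_le h
  rw [pow_add, mul_comm]
  calc z ^ k * z ^ n ≤ 1 * z ^ n := my_mul_le_left (ResLat.le_one _)
  _ = z ^ n := one_mul _

lemma my_sq (hS : ∀ x : A, x ⊓ rneg x = rbot) {z : A} (h : z * z ≤ rbot) :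
    z = rbot := by
  have hz : z ≤ rneg z := (ResLat.resid z z rbot).mp h
  rw [← hS z, inf_eq_left.mpr hz]

lemma my_nilp (hS : ∀ x : A, x ⊓ rneg x = rbot) :
    ∀ n : ℕ, ∀ z : A, 1 ≤ n → z ^ n ≤ rbot → z = rbot := by
  intro n
  induction n using Nat.strong_induction_on with
  | _ n ih =>
    intro z hn hle
    rcases eq_or_lt_of_le hn with h1 | h1
    · rw [← h1, pow_one] at hle
      exact le_antisymm hle (ResLat.rbot_le _)
    · set k := (n + 1) / 2 with hkdef
      have hk : 1 ≤ k := by omega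
      have hkn : k < n := by omega
      have h2k : n ≤ 2 * k := by omega
      have hw : (z ^ k) * (z ^ k) ≤ rbot := by
        calc (z ^ k) * (z ^ k) = z ^ (2 * k) := by rw [← pow_add]; ring_nf
        _ ≤ z ^ n := my_pow_le h2k
        _ ≤ rbot := hle
      have := my_sq hS hw
      exact ih k hkn z hk (le_of_eq this)

end Aux


theorem stmt12 {A : Type*} [ResLat A] (hS : ∀ x : A, x ⊓ rneg x = rbot)
    (hsimple : Simple A) :
    (rbot : A) ≠ 1 ∧ ∀ z : A, z = rbot ∨ z = 1 := by
  have h01 : (rbot : A) ≠ 1 := by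
    intro h
    obtain ⟨a, b, hab⟩ := hsimple.1
    apply hab
    have ha : a = 1 := le_antisymm (ResLat.le_one a) (h ▸ ResLat.rbot_le a)
    have hb : b = 1 := le_antisymm (ResLat.le_one b) (h ▸ ResLat.rbot_le b)
    rw [ha, hb]
  refine ⟨h01, fun z => ?_⟩
  set F : Set A := {y | ∃ n : ℕ, z ^ n ≤ y} with hF
  have hfil : ImpFilter F := by
    constructor
    · exact ⟨0, by rw [pow_zero]⟩
    · rintro x y ⟨n, hn⟩ ⟨m, hm⟩
      refine ⟨n + m, ?_⟩
      calc z ^ (n + m) = z ^ n * z ^ m := pow_add z n m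
      _ ≤ x * z ^ m := my_mul_le_left hn
      _ = z ^ m * x := mul_comm _ _
      _ ≤ himp x y * x := my_mul_le_left hm
      _ ≤ y := (ResLat.resid _ _ _).mpr le_rfl
  rcases hsimple.2 F hfil with h | h
  · right
    have hz : z ∈ F := ⟨1, by rw [pow_one]⟩
    rw [h] at hz
    exact hz
  · left
    have hb : rbot ∈ F := by rw [h]; trivial
    obtain ⟨n, hn⟩ := hb
    rcases Nat.eq_zero_or_pos n with rfl | hpos
    · rw [pow_zero] at hn
      exact absurd (le_antisymm hn (ResLat.rbot_le 1)).symm h01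
    · exact my_nilp hS n z hpos hn
end

section
/- In a Π-SMTL-algebra (an MTL-algebra satisfying x ∧ ¬x = 0 and (¬¬z ⊙ ((x⊙z) → (y⊙z))) → (x → y) = 1), the only idempotent dense element is 1. -/
open ResLat

theorem stmt14 {A : Type*} [ResLat A]
    (hpl : ∀ x y : A, himp x y ⊔ himp y x = 1)
    (hS : ∀ x : A, x ⊓ rneg x = rbot)
    (hPi : ∀ x y z : A, himp (rneg (rneg z) * himp (x * z) (y * z)) (himp x y) = 1) :
    ∀ x : A, rneg x = rbot → x * x = x → x = 1 := by
  intro x hd hi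
  have top : ∀ a : A, (1:A) ≤ a → a = 1 := fun a h => le_antisymm (le_one a) h
  have hxx : himp x x = (1:A) := top _ ((resid 1 x x).mp (by simp))
  have hnn : rneg (rneg x) = (1:A) := by
    rw [hd]
    exact top _ ((resid 1 rbot rbot).mp (by simp))
  have h := hPi 1 x x
  rw [one_mul, hi, hnn, hxx, one_mul] at h
  have h2 : (1:A) ≤ himp 1 x := by
    have := (resid 1 1 (himp 1 x)).mpr h.ge
    simpa using this
  have h3 : (1:A) ≤ x := by simpa using (resid 1 1 x).mpr h2
  exact top _ h3
end

section
/- Every bounded simple hoop is a simple MV-algebra: if I is a simple hoop with smallest element 0, then ¬¬x = x for all x ∈ I (where ¬x = x → 0), and I with x ∨ y = (x→y)→y is an MV-algebra. -/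
class Hoop (A : Type*) extends CommMonoid A where
  himp : A → A → A
  himp_self : ∀ x : A, himp x x = 1
  mul_himp : ∀ x y : A, himp x y * x = himp y x * y
  himp_himp : ∀ x y z : A, himp x (himp y z) = himp (x * y) z

namespace Hoop

variable {A : Type*} [Hoop A]

/-- The natural hoop order: x ≤ y iff x → y = 1. -/
def hle (x y : A) : Prop := himp x y = 1

def HFilter (F : Set A) : Prop :=
  (1 : A) ∈ F ∧ (∀ x y : A, x ∈ F → y ∈ F → x * y ∈ F) ∧
    (∀ x y : A, x ∈ F → hle x y → y ∈ F)

def SimpleHoop (A : Type*) [Hoop A] : Prop :=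
  Nontrivial A ∧ ∀ F : Set A, HFilter F → F = {1} ∨ F = Set.univ

end Hoop

open Hoop

section Lemmas

variable {A : Type*} [Hoop A]

lemma hle_refl (x : A) : hle x x := Hoop.himp_self x

lemma hle_antisymm {x y : A} (h1 : hle x y) (h2 : hle y x) : x = y := by
  have h := Hoop.mul_himp x y
  rw [h1, h2, one_mul, one_mul] at h
  exact h

lemma one_himp (x : A) : himp 1 x = x := by
  apply hle_antisymm
  · show himp (himp 1 x) x = 1
    have h := Hoop.himp_himp (himp 1 x) 1 x
    rw [mul_one] at h
    rw [← h, Hoop.himp_self]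
  · show himp x (himp 1 x) = 1
    rw [Hoop.himp_himp, mul_one, Hoop.himp_self]

lemma himp_one' (x : A) : himp x 1 = 1 := by
  have hux : himp x 1 * x = x := by rw [Hoop.mul_himp, one_himp, mul_one]
  have h2 : himp (himp x 1) (himp x 1) = himp x 1 := by
    rw [Hoop.himp_himp, hux]
  rw [Hoop.himp_self] at h2
  exact h2.symm

lemma hle_one (x : A) : hle x 1 := himp_one' x

lemma div_eq {x y : A} (h : hle x y) : himp y x * y = x := by
  rw [← Hoop.mul_himp, h, one_mul]

lemma hle_trans {x y z : A} (h1 : hle x y) (h2 : hle y z) : hle x z := by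
  show himp x z = 1
  rw [← div_eq h1, ← Hoop.himp_himp, h2, himp_one']

lemma hle_mul_left (x y : A) : hle (x * y) y := by
  show himp (x * y) y = 1
  rw [← Hoop.himp_himp, Hoop.himp_self, himp_one']

lemma hle_himp_mul (y x : A) : hle y (himp x (y * x)) := by
  show himp y (himp x (y * x)) = 1
  rw [Hoop.himp_himp, Hoop.himp_self]

lemma mul_mono_left {x y : A} (h : hle x y) (z : A) : hle (x * z) (y * z) := by
  have h1 : hle x (himp z (y * z)) := hle_trans h (hle_himp_mul y z)
  show himp (x * z) (y * z) = 1
  rw [← Hoop.himp_himp]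
  exact h1

lemma mul_neg_le (zero : A) (x : A) : hle (x * himp x zero) zero := by
  show himp (x * himp x zero) zero = 1
  rw [mul_comm, ← Hoop.himp_himp, Hoop.himp_self]

lemma le_negneg (zero : A) (x : A) : hle x (himp (himp x zero) zero) := by
  show himp x (himp (himp x zero) zero) = 1
  rw [Hoop.himp_himp]
  exact mul_neg_le zero x

lemma le_zero_eq (zero : A) (hzero : ∀ x : A, hle zero x) {x : A}
    (h : hle x zero) : x = zero :=
  hle_antisymm h (hzero x)

/-- Glivenko identity: ¬(¬¬x → x) = 0 in any bounded hoop. -/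
lemma glivenko (zero : A) (hzero : ∀ x : A, hle zero x) (x : A) :
    himp (himp (himp (himp x zero) zero) x) zero = zero := by
  set nx := himp x zero with hnx
  set z := himp nx zero with hzdef
  set s := himp z x with hsdef
  set u := himp s zero with hudef
  set v := himp z u with hvdef
  have hxz : hle x z := le_negneg zero x
  have hsz : s * z = x := div_eq hxz
  -- ¬x ≤ s
  have hnxs : hle nx s := by
    show himp nx (himp z x) = 1
    rw [Hoop.himp_himp]
    exact hle_trans (mul_neg_le zero nx) (hzero x)
  -- u * s ≤ 0
  have hus : hle (u * s) zero := by
    have h := mul_neg_le zero s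
    rwa [mul_comm] at h
  -- u ≤ z
  have huz : hle u z := by
    show himp u (himp nx zero) = 1
    rw [Hoop.himp_himp]
    have h1 : hle (u * nx) (u * s) := by
      have h := mul_mono_left hnxs u
      rwa [mul_comm nx u, mul_comm s u] at h
    exact hle_trans h1 hus
  have huv : v * z = u := div_eq huz
  -- v * x ≤ 0
  have hvx : hle (v * x) zero := by
    have h1 : v * x = u * s := by
      rw [← hsz, ← huv, mul_comm s z, ← mul_assoc]
    rw [h1]
    exact hus
  -- v ≤ ¬x
  have hvnx : hle v nx := by
    show himp v (himp x zero) = 1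
    rw [Hoop.himp_himp]
    exact hvx
  -- u = v * z ≤ ¬x * z ≤ 0
  have hfin : hle u zero := by
    rw [← huv]
    exact hle_trans (mul_mono_left hvnx z) (mul_neg_le zero nx)
  exact le_zero_eq zero hzero hfin

/-- In a simple hoop, every element ≠ 1 is nilpotent below zero. -/
lemma nilpotent (zero : A) (hs : SimpleHoop A) {a : A} (ha : a ≠ 1) :
    ∃ k : ℕ, hle (a ^ k) zero := by
  set F : Set A := {x | ∃ k : ℕ, hle (a ^ k) x} with hF
  have hfil : HFilter F := by
    refine ⟨⟨0, by rw [pow_zero]; exact hle_refl 1⟩, ?_, ?_⟩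
    · rintro x y ⟨k, hk⟩ ⟨l, hl⟩
      refine ⟨k + l, ?_⟩
      rw [pow_add]
      refine hle_trans (mul_mono_left hk (a ^ l)) ?_
      have h := mul_mono_left hl x
      rwa [mul_comm (a ^ l) x, mul_comm y x] at h
    · rintro x y ⟨k, hk⟩ hxy
      exact ⟨k, hle_trans hk hxy⟩
  rcases hs.2 F hfil with h1 | h2
  · exfalso
    have haF : a ∈ F := ⟨1, by rw [pow_one]; exact hle_refl a⟩
    rw [h1] at haF
    exact ha haF
  · show zero ∈ F
    rw [h2]
    trivial

lemma hoop_one_ne_zero (zero : A) (hzero : ∀ x : A, hle zero x)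
    (hs : SimpleHoop A) : (1 : A) ≠ zero := by
  intro h
  obtain ⟨a, b, hab⟩ := hs.1
  have key : ∀ x : A, x = 1 := fun x =>
    hle_antisymm (hle_one x) (h ▸ hzero x)
  exact hab ((key a).trans (key b).symm)

lemma neg_eq_zero_imp (zero : A) (hzero : ∀ x : A, hle zero x)
    (hs : SimpleHoop A) {w : A} (hw : himp w zero = zero) : w = 1 := by
  by_contra hne
  have aux : ∀ k : ℕ, w ^ k = zero → False := by
    intro k
    induction k with
    | zero =>
      intro h
      rw [pow_zero] at h
      exact hoop_one_ne_zero zero hzero hs h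
    | succ k ih =>
      intro h
      apply ih
      have h1 : hle (w ^ k) (himp w zero) := by
        show himp (w ^ k) (himp w zero) = 1
        rw [Hoop.himp_himp, ← pow_succ, h, Hoop.himp_self]
      rw [hw] at h1
      exact le_zero_eq zero hzero h1
  obtain ⟨k, hk⟩ := nilpotent zero hs hne
  exact aux k (le_zero_eq zero hzero hk)

/-- Double negation in a simple bounded hoop. -/
lemma double_neg (zero : A) (hzero : ∀ x : A, hle zero x)
    (hs : SimpleHoop A) (x : A) : himp (himp x zero) zero = x := by
  have h1 := glivenko zero hzero x
  have h2 := neg_eq_zero_imp zero hzero hs h1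
  exact hle_antisymm h2 (le_negneg zero x)

end Lemmas

theorem stmt18 {A : Type*} [Hoop A] (zero : A) (hzero : ∀ x : A, hle zero x)
    (hs : SimpleHoop A) :
    (∀ x : A, himp (himp x zero) zero = x) ∧
    (∀ x y : A, himp (himp x y) y = himp (himp y x) x) := by
  have dn : ∀ x : A, himp (himp x zero) zero = x := double_neg zero hzero hs
  refine ⟨dn, ?_⟩
  have key1 : ∀ x y : A, himp x y = himp (x * himp y zero) zero := by
    intro x y
    conv_lhs => rw [← dn y]
    rw [Hoop.himp_himp]
  have key2 : ∀ x y : A, himp (himp x y) zero = x * himp y zero := by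
    intro x y
    rw [key1 x y, dn]
  have hswap : ∀ x y : A, himp x y = himp (himp y zero) (himp x zero) := by
    intro x y
    rw [key1 x y, mul_comm, ← Hoop.himp_himp]
  intro x y
  have hneg : himp (himp (himp x y) y) zero = himp (himp (himp y x) x) zero := by
    rw [key2 (himp x y) y, key2 (himp y x) x, hswap x y, hswap y x]
    exact Hoop.mul_himp (himp y zero) (himp x zero)
  calc himp (himp x y) y
      = himp (himp (himp (himp x y) y) zero) zero := (dn _).symm
    _ = himp (himp (himp (himp y x) x) zero) zero := by rw [hneg]
    _ = himp (himp y x) x := dn _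
end
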